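/- arXiv:2207.02251 — 4 statements merged into one kernel-verified Lean document; each statement's English description precedes it below -/
import Mathlib

section
/- Suppose the nonholonomic system (M, Ω_M|_C, H_M) with G-symmetry admits k = rank(S) functionally independent G-invariant horizontal gauge momenta J_1, …, J_k with Ad-invariant horizontal gauge symmetries ζ_1, …, ζ_k, and the vertical symmetry condition holds. Let η_1, …, η_k be the corresponding f-valued functions on Q̃ and define J̃_i = i_{(η_i)_{T*Q̃}} Θ_Q̃ on T*Q̃. Then: (i) the functions J̃_1, …, J̃_k are functionally independent and ρ_{G_W}* J̃_i = J_i, where ρ_{G_W} : M → T*Q̃ ≅ M/G_W is the orbit projection; (ii) each J̃_i is conserved by the partially reduced dynamics X̃_nh. -/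
/-!
Since `(ζ_i)_Q` lies in `D` and projects to `(η_i)_{Q̃}`, the reduced covector `ρ m` pairs with
`(η_i)_{Q̃}` exactly as `m` pairs with `(ζ_i)_Q`; hence `ρ^* J̃_i = J_i`. By the chain rule
`dJ_i = dJ̃_i ∘ Tρ`, a linear relation among the `dJ̃_i` pulls back to one among the `dJ_i`, and
`dJ̃_i(X̃_nh) = dJ_i(X_nh) = 0`; surjectivity of `ρ` makes both statements hold on all of `T*Q̃`.
-/

section Descent

variable {M Mt TM TMt : Type*} [AddCommGroup TM] [Module ℝ TM] [AddCommGroup TMt] [Module ℝ TMt]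
  {ρ : M → Mt} {dM : (M → ℝ) → M → TM →ₗ[ℝ] ℝ} {dMt : (Mt → ℝ) → Mt → TMt →ₗ[ℝ] ℝ}
  {TρM : M → TM →ₗ[ℝ] TMt}

theorem differential_eq_comp_of_pullback_eq
    (hchain : ∀ (f : Mt → ℝ) (m : M), dM (fun m' => f (ρ m')) m = (dMt f (ρ m)).comp (TρM m))
    {f : Mt → ℝ} {g : M → ℝ} (hfg : ∀ m, f (ρ m) = g m) (m : M) :
    dM g m = (dMt f (ρ m)).comp (TρM m) := by
  rw [← hchain, funext hfg]

theorem linearIndependent_differential_of_pullback {ι : Type*} (hρ : Function.Surjective ρ)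
    (hchain : ∀ (f : Mt → ℝ) (m : M), dM (fun m' => f (ρ m')) m = (dMt f (ρ m)).comp (TρM m))
    {f : ι → Mt → ℝ} {g : ι → M → ℝ} (hfg : ∀ i m, f i (ρ m) = g i m)
    (hg : ∀ m, LinearIndependent ℝ (fun i => dM (g i) m)) (α : Mt) :
    LinearIndependent ℝ (fun i => dMt (f i) α) := by
  obtain ⟨m, rfl⟩ := hρ α
  refine LinearIndependent.of_comp (LinearMap.lcomp ℝ ℝ (TρM m)) ?_
  convert hg m using 1
  exact funext fun i => (differential_eq_comp_of_pullback_eq hchain (hfg i) m).symm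

theorem differential_apply_eq_zero_of_pullback (hρ : Function.Surjective ρ)
    (hchain : ∀ (f : Mt → ℝ) (m : M), dM (fun m' => f (ρ m')) m = (dMt f (ρ m)).comp (TρM m))
    {X : M → TM} {Xt : Mt → TMt} (hX : ∀ m, Xt (ρ m) = TρM m (X m))
    {f : Mt → ℝ} {g : M → ℝ} (hfg : ∀ m, f (ρ m) = g m) (hg : ∀ m, dM g m (X m) = 0) (α : Mt) :
    dMt f α (Xt α) = 0 := by
  obtain ⟨m, rfl⟩ := hρ α
  rw [hX, ← LinearMap.comp_apply, ← differential_eq_comp_of_pullback_eq hchain hfg, hg]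

end Descent

theorem statement4_general
    {Q Qt M Mt E Et TM TMt 𝔤 𝔣 : Type*}
    [AddCommGroup E] [Module ℝ E] [AddCommGroup Et] [Module ℝ Et]
    [AddCommGroup TM] [Module ℝ TM] [AddCommGroup TMt] [Module ℝ TMt]
    [AddCommGroup 𝔤] [Module ℝ 𝔤] [AddCommGroup 𝔣] [Module ℝ 𝔣]
    {k : ℕ}
    -- bundle projections and orbit projections
    (τ : M → Q) (π : Q → Qt)
    (ρ : M → Mt) (hρ : Function.Surjective ρ)          -- ρ_{G_W} : M → T*Q̃
    (baset : Mt → Qt) (pt : Mt → Et →ₗ[ℝ] ℝ)           -- point of T*Q̃ = base + covector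
    (hbase : ∀ m, baset (ρ m) = π (τ m))
    (pM : M → E →ₗ[ℝ] ℝ)                                -- covector underlying m ∈ M ⊂ T*Q
    -- infinitesimal generators on Q and Q̃
    (σ : Q → 𝔤 →ₗ[ℝ] E) (σt : Qt → 𝔣 →ₗ[ℝ] Et)
    -- tangent map of the orbit projection π : Q → Q̃
    (Tρ : Q → E →ₗ[ℝ] Et)
    -- the constraint distribution D, (ζ_i)_Q ∈ S ⊂ D
    (D : Q → Submodule ℝ E)
    -- the reduced covector satisfies ⟨ρ(m), Tρ v⟩ = ⟨m, v⟩ on constrained directions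
    (hred : ∀ m : M, ∀ v ∈ D (τ m), pt (ρ m) (Tρ (τ m) v) = pM m v)
    -- the horizontal gauge symmetries ζ_i and the induced 𝔣-valued functions η_i on Q̃
    (ζ : Fin k → Q → 𝔤) (hζD : ∀ (i : Fin k) (q : Q), σ q (ζ i q) ∈ D q)
    (ηt : Fin k → Qt → 𝔣)
    (hη : ∀ (i : Fin k) (q : Q), Tρ q (σ q (ζ i q)) = σt (π q) (ηt i (π q)))
    -- the G-invariant horizontal gauge momenta J_i = ⟨J^nh, ζ_i⟩ on M
    (J : Fin k → M → ℝ)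
    (hJ : ∀ (i : Fin k) (m : M), J i m = pM m (σ (τ m) (ζ i (τ m))))
    -- abstract differentials on M and on T*Q̃ and the chain rule along ρ
    (dM : (M → ℝ) → M → TM →ₗ[ℝ] ℝ)
    (dMt : (Mt → ℝ) → Mt → TMt →ₗ[ℝ] ℝ)
    (TρM : M → TM →ₗ[ℝ] TMt)
    (hchain : ∀ (f : Mt → ℝ) (m : M),
      dM (fun m' => f (ρ m')) m = (dMt f (ρ m)).comp (TρM m))
    -- the nonholonomic vector field and the partially reduced dynamics X̃_nh = Tρ(X_nh)
    (Xnh : (m : M) → TM) (Xnht : (α : Mt) → TMt)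
    (hXnht : ∀ m, Xnht (ρ m) = TρM m (Xnh m))
    -- the J_i are functionally independent horizontal gauge momenta (conserved by X_nh)
    (hJind : ∀ m : M, LinearIndependent ℝ (fun i : Fin k => dM (J i) m))
    (hJcons : ∀ (i : Fin k) (m : M), dM (J i) m (Xnh m) = 0)
    -- the partially reduced horizontal gauge momenta J̃_i = i_{(η_i)_{T*Q̃}} Θ_Q̃
    (Jt : Fin k → Mt → ℝ)
    (hJt : ∀ (i : Fin k) (α : Mt), Jt i α = pt α (σt (baset α) (ηt i (baset α)))) :
    -- (i) ρ_{G_W}^* J̃_i = J_i and the J̃_i are functionally independent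
    (∀ (i : Fin k) (m : M), Jt i (ρ m) = J i m) ∧
    (∀ α : Mt, LinearIndependent ℝ (fun i : Fin k => dMt (Jt i) α)) ∧
    -- (ii) the J̃_i are conserved by the partially reduced dynamics X̃_nh
    (∀ (i : Fin k) (α : Mt), dMt (Jt i) α (Xnht α) = 0) := by
  have hpull : ∀ (i : Fin k) (m : M), Jt i (ρ m) = J i m := fun i m => by
    rw [hJt, hbase, ← hη, hred _ _ (hζD i (τ m)), hJ]
  exact ⟨hpull, linearIndependent_differential_of_pullback hρ hchain hpull hJind,
    fun i => differential_apply_eq_zero_of_pullback hρ hchain hXnht (hpull i) (hJcons i)⟩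

theorem statement4
    {Q Qt M Mt G E Et TM TMt 𝔤 𝔣 : Type*} [Group G] [MulAction G Q] [MulAction G M]
    [AddCommGroup E] [Module ℝ E] [AddCommGroup Et] [Module ℝ Et]
    [AddCommGroup TM] [Module ℝ TM] [AddCommGroup TMt] [Module ℝ TMt]
    [AddCommGroup 𝔤] [Module ℝ 𝔤] [AddCommGroup 𝔣] [Module ℝ 𝔣]
    {k : ℕ}
    -- bundle projections and orbit projections
    (τ : M → Q) (π : Q → Qt)
    (ρ : M → Mt) (hρ : Function.Surjective ρ)          -- ρ_{G_W} : M → T*Q̃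
    (baset : Mt → Qt) (pt : Mt → Et →ₗ[ℝ] ℝ)           -- point of T*Q̃ = base + covector
    (hbase : ∀ m, baset (ρ m) = π (τ m))
    (pM : M → E →ₗ[ℝ] ℝ)                                -- covector underlying m ∈ M ⊂ T*Q
    -- infinitesimal generators on Q and Q̃
    (σ : Q → 𝔤 →ₗ[ℝ] E) (σt : Qt → 𝔣 →ₗ[ℝ] Et)
    -- tangent map of the orbit projection π : Q → Q̃
    (Tρ : Q → E →ₗ[ℝ] Et)
    -- the constraint distribution D, (ζ_i)_Q ∈ S ⊂ D
    (D : Q → Submodule ℝ E)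
    -- the reduced covector satisfies ⟨ρ(m), Tρ v⟩ = ⟨m, v⟩ on constrained directions
    (hred : ∀ m : M, ∀ v ∈ D (τ m), pt (ρ m) (Tρ (τ m) v) = pM m v)
    -- the horizontal gauge symmetries ζ_i and the induced 𝔣-valued functions η_i on Q̃
    (ζ : Fin k → Q → 𝔤) (hζD : ∀ (i : Fin k) (q : Q), σ q (ζ i q) ∈ D q)
    (ηt : Fin k → Qt → 𝔣)
    (hη : ∀ (i : Fin k) (q : Q), Tρ q (σ q (ζ i q)) = σt (π q) (ηt i (π q)))
    -- the G-invariant horizontal gauge momenta J_i = ⟨J^nh, ζ_i⟩ on M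
    (J : Fin k → M → ℝ)
    (hJ : ∀ (i : Fin k) (m : M), J i m = pM m (σ (τ m) (ζ i (τ m))))
    (hJinv : ∀ (i : Fin k) (g : G) (m : M), J i (g • m) = J i m)
    -- abstract differentials on M and on T*Q̃ and the chain rule along ρ
    (dM : (M → ℝ) → M → TM →ₗ[ℝ] ℝ)
    (dMt : (Mt → ℝ) → Mt → TMt →ₗ[ℝ] ℝ)
    (TρM : M → TM →ₗ[ℝ] TMt) (hTρM : ∀ m, Function.Surjective (TρM m))
    (hchain : ∀ (f : Mt → ℝ) (m : M),
      dM (fun m' => f (ρ m')) m = (dMt f (ρ m)).comp (TρM m))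
    -- the nonholonomic vector field and the partially reduced dynamics X̃_nh = Tρ(X_nh)
    (Xnh : (m : M) → TM) (Xnht : (α : Mt) → TMt)
    (hXnht : ∀ m, Xnht (ρ m) = TρM m (Xnh m))
    -- the J_i are functionally independent horizontal gauge momenta (conserved by X_nh)
    (hJind : ∀ m : M, LinearIndependent ℝ (fun i : Fin k => dM (J i) m))
    (hJcons : ∀ (i : Fin k) (m : M), dM (J i) m (Xnh m) = 0)
    -- the partially reduced horizontal gauge momenta J̃_i = i_{(η_i)_{T*Q̃}} Θ_Q̃
    (Jt : Fin k → Mt → ℝ)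
    (hJt : ∀ (i : Fin k) (α : Mt), Jt i α = pt α (σt (baset α) (ηt i (baset α)))) :
    -- (i) ρ_{G_W}^* J̃_i = J_i and the J̃_i are functionally independent
    (∀ (i : Fin k) (m : M), Jt i (ρ m) = J i m) ∧
    (∀ α : Mt, LinearIndependent ℝ (fun i : Fin k => dMt (Jt i) α)) ∧
    -- (ii) the J̃_i are conserved by the partially reduced dynamics X̃_nh
    (∀ (i : Fin k) (α : Mt), dMt (Jt i) α (Xnht α) = 0) :=
  statement4_general τ π ρ hρ baset pt hbase pM σ σt Tρ D hred ζ hζD ηt hη J hJ dM dMt TρM hchain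
    Xnh Xnht hXnht hJind hJcons Jt hJt
end

section
/- Under the vertical symmetry condition, the 2-form B̃ := B̃₁ + 𝓑̃ on T*Q̃ defines a dynamical gauge transformation of the partially reduced nonholonomic system (T*Q̃, Ω̃, H̃): B̃ is semi-basic with respect to the bundle T*Q̃ → Q̃ and i_{X̃_nh} B̃ = 0. Consequently the partially reduced dynamics is also given by i_{X̃_nh}(Ω̃ + B̃) = dH̃. -/
/-!
Everything is checked fibrewise and descends along `ρ_{G_W}`: since `ρ_{G_W}` and its tangent
maps are surjective, every tangent vector of `T*Q̃` is a pushforward `Tρ_{G_W} v`, on which `B̃`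
evaluates as `B`. A `τ̃`-vertical pushforward is, by the vertical symmetry condition, also the
pushforward of a `τ_M`-vertical vector, so semi-basicity of `B` descends to `B̃`; and
`X̃_nh = Tρ_{G_W} X_nh`, so `i_{X_nh} B = 0` descends to `i_{X̃_nh} B̃ = 0`.
-/

namespace LinearMap

variable {R V W E F : Type*} [CommSemiring R]
  [AddCommMonoid V] [Module R V] [AddCommMonoid W] [Module R W]
  [AddCommMonoid E] [Module R E] [AddCommMonoid F] [Module R F]

def IsSemiBasic (b : V →ₗ[R] V →ₗ[R] R) (p : V →ₗ[R] E) : Prop :=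
  ∀ v w, p v = 0 → b v w = 0 ∧ b w v = 0

theorem IsSemiBasic.descend {b : V →ₗ[R] V →ₗ[R] R} {p : V →ₗ[R] E} (hb : b.IsSemiBasic p)
    {f : V →ₗ[R] W} (hf : Function.Surjective f) {b' : W →ₗ[R] W →ₗ[R] R} {p' : W →ₗ[R] F}
    (hb' : ∀ v w, b' (f v) (f w) = b v w)
    (hlift : ∀ v, p' (f v) = 0 → ∃ v', p v' = 0 ∧ f v' = f v) :
    b'.IsSemiBasic p' := by
  intro v w hv
  obtain ⟨v, rfl⟩ := hf v
  obtain ⟨w, rfl⟩ := hf w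
  obtain ⟨v', hv', hfv'⟩ := hlift v hv
  rw [← hfv', hb', hb']
  exact hb v' w hv'

theorem apply_map_eq_zero_of_descend {b : V →ₗ[R] V →ₗ[R] R} {x : V} (hx : ∀ w, b x w = 0)
    {f : V →ₗ[R] W} (hf : Function.Surjective f) {b' : W →ₗ[R] W →ₗ[R] R}
    (hb' : ∀ v w, b' (f v) (f w) = b v w) (w : W) : b' (f x) w = 0 := by
  obtain ⟨w, rfl⟩ := hf w
  rw [hb']
  exact hx w

end LinearMap

open LinearMap

theorem statement8_general
    {M Q Mt TM TMt E Et : Type*}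
    [AddCommGroup TM] [Module ℝ TM] [AddCommGroup TMt] [Module ℝ TMt]
    [AddCommGroup E] [Module ℝ E] [AddCommGroup Et] [Module ℝ Et]
    -- bundle projections τ_M : M → Q, τ̃ : T*Q̃ → Q̃ and their tangent maps
    (τ : M → Q)
    (Tτ : M → TM →ₗ[ℝ] E) (Tτt : Mt → TMt →ₗ[ℝ] Et)
    -- the orbit projections ρ_{G_W} : M → T*Q̃ and π_Q : Q → Q̃
    (ρGW : M → Mt) (hρ : Function.Surjective ρGW)
    (TπQ : Q → E →ₗ[ℝ] Et)
    (TρGW : M → TM →ₗ[ℝ] TMt) (hTρ : ∀ m, Function.Surjective (TρGW m))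
    (hTcomm : ∀ (m : M) (v : TM), Tτt (ρGW m) (TρGW m v) = TπQ (τ m) (Tτ m v))
    -- vertical vectors for τ̃ lift to vertical vectors for τ_M modulo Ker Tρ_{G_W}
    (hlift : ∀ (m : M) (v : TM), TπQ (τ m) (Tτ m v) = 0 →
      ∃ v' : TM, Tτ m v' = 0 ∧ TρGW m v' = TρGW m v)
    -- the 2-form B = B₁ + 𝓑 on M: semi-basic over Q and with i_{X_nh} B = 0
    (B : M → TM →ₗ[ℝ] TM →ₗ[ℝ] ℝ)
    (hBsb : ∀ (m : M) (v w : TM), Tτ m v = 0 → B m v w = 0 ∧ B m w v = 0)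
    (Xnh : (m : M) → TM)
    (hBdyn : ∀ (m : M) (w : TM), B m (Xnh m) w = 0)
    -- the descended 2-form B̃ = B̃₁ + 𝓑̃ on T*Q̃, with ρ_{G_W}^* B̃ = B
    (Bt : Mt → TMt →ₗ[ℝ] TMt →ₗ[ℝ] ℝ)
    (hBt : ∀ (m : M) (v w : TM), Bt (ρGW m) (TρGW m v) (TρGW m w) = B m v w)
    -- the partially reduced dynamics X̃_nh = Tρ_{G_W}(X_nh)
    (Xnht : (α : Mt) → TMt) (hXnht : ∀ m : M, Xnht (ρGW m) = TρGW m (Xnh m))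
    -- the Chaplygin 2-form Ω̃ = Ω_Q̃ − B_⟨JK⟩ and the hamiltonian H̃ on T*Q̃,
    -- with i_{X̃_nh} Ω̃ = dH̃
    (Ωt : Mt → TMt →ₗ[ℝ] TMt →ₗ[ℝ] ℝ)
    (dHt : Mt → TMt →ₗ[ℝ] ℝ)
    (hdyn : ∀ (α : Mt) (w : TMt), Ωt α (Xnht α) w = dHt α w) :
    -- B̃ is semi-basic with respect to T*Q̃ → Q̃:
    (∀ (α : Mt) (v w : TMt), Tτt α v = 0 → Bt α v w = 0 ∧ Bt α w v = 0) ∧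
    -- B̃ satisfies the dynamical condition i_{X̃_nh} B̃ = 0:
    (∀ (α : Mt) (w : TMt), Bt α (Xnht α) w = 0) ∧
    -- consequently i_{X̃_nh}(Ω̃ + B̃) = dH̃:
    (∀ (α : Mt) (w : TMt), Ωt α (Xnht α) w + Bt α (Xnht α) w = dHt α w) := by
  have semiBasic : ∀ α, (Bt α).IsSemiBasic (Tτt α) := by
    intro α
    obtain ⟨m, rfl⟩ := hρ α
    exact IsSemiBasic.descend (hBsb m) (hTρ m) (hBt m)
      fun v hv => hlift m v (hTcomm m v ▸ hv)
  have annihilates : ∀ α w, Bt α (Xnht α) w = 0 := by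
    intro α
    obtain ⟨m, rfl⟩ := hρ α
    rw [hXnht]
    exact apply_map_eq_zero_of_descend (hBdyn m) (hTρ m) (hBt m)
  refine ⟨semiBasic, annihilates, fun α w => ?_⟩
  rw [annihilates, add_zero, hdyn]

theorem statement8
    {M Q Mt Qt TM TMt E Et : Type*}
    [AddCommGroup TM] [Module ℝ TM] [AddCommGroup TMt] [Module ℝ TMt]
    [AddCommGroup E] [Module ℝ E] [AddCommGroup Et] [Module ℝ Et]
    -- bundle projections τ_M : M → Q, τ̃ : T*Q̃ → Q̃ and their tangent maps
    (τ : M → Q) (τt : Mt → Qt)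
    (Tτ : M → TM →ₗ[ℝ] E) (Tτt : Mt → TMt →ₗ[ℝ] Et)
    -- the orbit projections ρ_{G_W} : M → T*Q̃ and π_Q : Q → Q̃
    (ρGW : M → Mt) (hρ : Function.Surjective ρGW)
    (πQ : Q → Qt) (TπQ : Q → E →ₗ[ℝ] Et)
    (TρGW : M → TM →ₗ[ℝ] TMt) (hTρ : ∀ m, Function.Surjective (TρGW m))
    (hcomm : ∀ m : M, τt (ρGW m) = πQ (τ m))
    (hTcomm : ∀ (m : M) (v : TM), Tτt (ρGW m) (TρGW m v) = TπQ (τ m) (Tτ m v))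
    -- vertical vectors for τ̃ lift to vertical vectors for τ_M modulo Ker Tρ_{G_W}
    (hlift : ∀ (m : M) (v : TM), TπQ (τ m) (Tτ m v) = 0 →
      ∃ v' : TM, Tτ m v' = 0 ∧ TρGW m v' = TρGW m v)
    -- the 2-form B = B₁ + 𝓑 on M: semi-basic over Q and with i_{X_nh} B = 0
    (B : M → TM →ₗ[ℝ] TM →ₗ[ℝ] ℝ)
    (hBsb : ∀ (m : M) (v w : TM), Tτ m v = 0 → B m v w = 0 ∧ B m w v = 0)
    (Xnh : (m : M) → TM)
    (hBdyn : ∀ (m : M) (w : TM), B m (Xnh m) w = 0)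
    -- the descended 2-form B̃ = B̃₁ + 𝓑̃ on T*Q̃, with ρ_{G_W}^* B̃ = B
    (Bt : Mt → TMt →ₗ[ℝ] TMt →ₗ[ℝ] ℝ)
    (hBt : ∀ (m : M) (v w : TM), Bt (ρGW m) (TρGW m v) (TρGW m w) = B m v w)
    -- the partially reduced dynamics X̃_nh = Tρ_{G_W}(X_nh)
    (Xnht : (α : Mt) → TMt) (hXnht : ∀ m : M, Xnht (ρGW m) = TρGW m (Xnh m))
    -- the Chaplygin 2-form Ω̃ = Ω_Q̃ − B_⟨JK⟩ and the hamiltonian H̃ on T*Q̃,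
    -- with i_{X̃_nh} Ω̃ = dH̃
    (Ωt : Mt → TMt →ₗ[ℝ] TMt →ₗ[ℝ] ℝ)
    (Ht : Mt → ℝ) (dHt : Mt → TMt →ₗ[ℝ] ℝ)
    (hdyn : ∀ (α : Mt) (w : TMt), Ωt α (Xnht α) w = dHt α w) :
    -- B̃ is semi-basic with respect to T*Q̃ → Q̃:
    (∀ (α : Mt) (v w : TMt), Tτt α v = 0 → Bt α v w = 0 ∧ Bt α w v = 0) ∧
    -- B̃ satisfies the dynamical condition i_{X̃_nh} B̃ = 0:
    (∀ (α : Mt) (w : TMt), Bt α (Xnht α) w = 0) ∧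
    -- consequently i_{X̃_nh}(Ω̃ + B̃) = dH̃:
    (∀ (α : Mt) (w : TMt), Ωt α (Xnht α) w + Bt α (Xnht α) w = dHt α w) :=
  statement8_general τ Tτ Tτt ρGW hρ TπQ TρGW hTρ hTcomm hlift B hBsb Xnh hBdyn Bt hBt Xnht hXnht Ωt
    dHt hdyn
end

section
/- Under the hypotheses above, the reduced nonholonomic vector field X_red on M/G is tangent to each manifold J̃^{-1}(μ)/F with μ = c_iμ^i, and its restriction to such a leaf is the hamiltonian vector field of the 2-form ω_μ^B with hamiltonian function H_μ := (ι_μ^red)* H_red, where ι_μ^red : J̃^{-1}(μ)/F → T*Q̃/F ≅ M/G is the inclusion and H_red the reduced hamiltonian. -/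
/-!
By the chain rule along `ρF`, `dJ̄_i (X_red) = dJ̃_i (X̃_nh) = 0`. Since `TρF` is onto, a vector
`w` tangent to the leaf is `TρF v` with `dJ̃_i v = 0`, so that
`ω_μ^B (X_red, w) = Ω̃_B (X̃_nh, v) = dH̃ v = dH_red w`.
-/

theorem differential_pushforward_eq_of_pullback
    {Mt Mbar TMt TMbar : Type*}
    [AddCommGroup TMt] [Module ℝ TMt] [AddCommGroup TMbar] [Module ℝ TMbar]
    {ρ : Mt → Mbar} {Tρ : Mt → TMt →ₗ[ℝ] TMbar}
    {dMt : (Mt → ℝ) → Mt → TMt →ₗ[ℝ] ℝ} {dMbar : (Mbar → ℝ) → Mbar → TMbar →ₗ[ℝ] ℝ}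
    (hchain : ∀ (f : Mbar → ℝ) (α : Mt),
      dMt (fun α' => f (ρ α')) α = (dMbar f (ρ α)).comp (Tρ α))
    {f : Mbar → ℝ} {g : Mt → ℝ} (hfg : ∀ α, f (ρ α) = g α) (α : Mt) (v : TMt) :
    dMbar f (ρ α) (Tρ α v) = dMt g α v := by
  rw [← funext hfg, hchain]
  rfl

theorem statement12_general
    {Mt Mbar TMt TMbar : Type*}
    [AddCommGroup TMt] [Module ℝ TMt] [AddCommGroup TMbar] [Module ℝ TMbar]
    {k : ℕ}
    -- the orbit projection ρ_F : T*Q̃ → T*Q̃/F ≅ M/G and its tangent maps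
    (ρF : Mt → Mbar)
    (TρF : Mt → TMt →ₗ[ℝ] TMbar) (hTρF : ∀ α, Function.Surjective (TρF α))
    -- abstract differentials and the chain rule along ρ_F
    (dMt : (Mt → ℝ) → Mt → TMt →ₗ[ℝ] ℝ)
    (dMbar : (Mbar → ℝ) → Mbar → TMbar →ₗ[ℝ] ℝ)
    (hchain : ∀ (f : Mbar → ℝ) (α : Mt),
      dMt (fun α' => f (ρF α')) α = (dMbar f (ρF α)).comp (TρF α))
    -- the partially reduced dynamics and the reduced dynamics X_red = TρF(X̃_nh)
    (Xnht : (α : Mt) → TMt) (Xred : (x : Mbar) → TMbar)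
    (hXred : ∀ α : Mt, Xred (ρF α) = TρF α (Xnht α))
    -- hamiltonians: i_{X̃_nh} Ω̃_B = dH̃ with ρ_F^* H_red = H̃
    (ΩB : Mt → TMt →ₗ[ℝ] TMt →ₗ[ℝ] ℝ)
    (Ht : Mt → ℝ) (Hred : Mbar → ℝ) (hHred : ∀ α : Mt, Hred (ρF α) = Ht α)
    (hdyn : ∀ (α : Mt) (w : TMt), ΩB α (Xnht α) w = dMt Ht α w)
    -- the J̃_i are conserved by X̃_nh, and J̄_i are their reductions
    (Jt : Fin k → Mt → ℝ) (Jbar : Fin k → Mbar → ℝ)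
    (hJbar : ∀ (i : Fin k) (α : Mt), Jbar i (ρF α) = Jt i α)
    (hJcons : ∀ (i : Fin k) (α : Mt), dMt (Jt i) α (Xnht α) = 0)
    -- the level μ = c_i μ^i : J̃⁻¹(μ) upstairs, and the leaf J̃⁻¹(μ)/F downstairs
    (L : Set Mt)
    (leaf : Set Mbar) (hleaf : leaf = ρF '' L)
    -- tangent spaces to the leaf J̃⁻¹(μ)/F inside M/G
    (Tleaf : (x : Mbar) → Submodule ℝ TMbar)
    (hTleaf : ∀ x : Mbar, Tleaf x = ⨅ i : Fin k, LinearMap.ker (dMbar (Jbar i) x))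
    -- the reduced almost symplectic form ω_μ^B : ι_μ^* Ω̃_B = ρ_μ^* ω_μ^B
    (ωμ : Mbar → TMbar →ₗ[ℝ] TMbar →ₗ[ℝ] ℝ)
    (hωμ : ∀ α ∈ L, ∀ v w : TMt,
      (∀ i : Fin k, dMt (Jt i) α v = 0) → (∀ i : Fin k, dMt (Jt i) α w = 0) →
        ΩB α v w = ωμ (ρF α) (TρF α v) (TρF α w)) :
    ∀ x ∈ leaf,
      -- X_red is tangent to J̃⁻¹(μ)/F :
      ((∀ i : Fin k, dMbar (Jbar i) x (Xred x) = 0) ∧ Xred x ∈ Tleaf x) ∧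
      -- on the leaf, X_red is hamiltonian for ω_μ^B with hamiltonian
      -- H_μ = (ι_μ^red)^* H_red :
      (∀ w ∈ Tleaf x, ωμ x (Xred x) w = dMbar Hred x w) := by
  subst hleaf
  rintro _ ⟨α, hαL, rfl⟩
  have hJpush (i : Fin k) := differential_pushforward_eq_of_pullback hchain (hJbar i) α
  have hmem (w : TMbar) : w ∈ Tleaf (ρF α) ↔ ∀ i, dMbar (Jbar i) (ρF α) w = 0 := by
    simp only [hTleaf, Submodule.mem_iInf, LinearMap.mem_ker]
  have htan (i : Fin k) : dMbar (Jbar i) (ρF α) (Xred (ρF α)) = 0 := by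
    rw [hXred, hJpush]
    exact hJcons i α
  refine ⟨⟨htan, (hmem _).2 htan⟩, fun w hw => ?_⟩
  obtain ⟨v, rfl⟩ := hTρF α w
  have hv (i : Fin k) : dMt (Jt i) α v = 0 := by
    rw [← hJpush]
    exact (hmem _).1 hw i
  rw [hXred, ← hωμ α hαL _ v (fun i => hJcons i α) hv, hdyn,
    differential_pushforward_eq_of_pullback hchain hHred]

theorem statement12
    {Mt Mbar TMt TMbar : Type*}
    [AddCommGroup TMt] [Module ℝ TMt] [AddCommGroup TMbar] [Module ℝ TMbar]
    {k : ℕ}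
    -- the orbit projection ρ_F : T*Q̃ → T*Q̃/F ≅ M/G and its tangent maps
    (ρF : Mt → Mbar) (hρF : Function.Surjective ρF)
    (TρF : Mt → TMt →ₗ[ℝ] TMbar) (hTρF : ∀ α, Function.Surjective (TρF α))
    -- abstract differentials and the chain rule along ρ_F
    (dMt : (Mt → ℝ) → Mt → TMt →ₗ[ℝ] ℝ)
    (dMbar : (Mbar → ℝ) → Mbar → TMbar →ₗ[ℝ] ℝ)
    (hchain : ∀ (f : Mbar → ℝ) (α : Mt),
      dMt (fun α' => f (ρF α')) α = (dMbar f (ρF α)).comp (TρF α))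
    -- the partially reduced dynamics and the reduced dynamics X_red = TρF(X̃_nh)
    (Xnht : (α : Mt) → TMt) (Xred : (x : Mbar) → TMbar)
    (hXred : ∀ α : Mt, Xred (ρF α) = TρF α (Xnht α))
    -- hamiltonians: i_{X̃_nh} Ω̃_B = dH̃ with ρ_F^* H_red = H̃
    (ΩB : Mt → TMt →ₗ[ℝ] TMt →ₗ[ℝ] ℝ)
    (Ht : Mt → ℝ) (Hred : Mbar → ℝ) (hHred : ∀ α : Mt, Hred (ρF α) = Ht α)
    (hdyn : ∀ (α : Mt) (w : TMt), ΩB α (Xnht α) w = dMt Ht α w)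
    -- the J̃_i are conserved by X̃_nh, and J̄_i are their reductions
    (Jt : Fin k → Mt → ℝ) (Jbar : Fin k → Mbar → ℝ)
    (hJbar : ∀ (i : Fin k) (α : Mt), Jbar i (ρF α) = Jt i α)
    (hJcons : ∀ (i : Fin k) (α : Mt), dMt (Jt i) α (Xnht α) = 0)
    -- the level μ = c_i μ^i : J̃⁻¹(μ) upstairs, and the leaf J̃⁻¹(μ)/F downstairs
    (c : Fin k → ℝ)
    (L : Set Mt) (hL : L = {α : Mt | ∀ i : Fin k, Jt i α = c i})
    (leaf : Set Mbar) (hleaf : leaf = ρF '' L)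
    -- tangent spaces to the leaf J̃⁻¹(μ)/F inside M/G
    (Tleaf : (x : Mbar) → Submodule ℝ TMbar)
    (hTleaf : ∀ x : Mbar, Tleaf x = ⨅ i : Fin k, LinearMap.ker (dMbar (Jbar i) x))
    -- the reduced almost symplectic form ω_μ^B : ι_μ^* Ω̃_B = ρ_μ^* ω_μ^B
    (ωμ : Mbar → TMbar →ₗ[ℝ] TMbar →ₗ[ℝ] ℝ)
    (hωμ : ∀ α ∈ L, ∀ v w : TMt,
      (∀ i : Fin k, dMt (Jt i) α v = 0) → (∀ i : Fin k, dMt (Jt i) α w = 0) →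
        ΩB α v w = ωμ (ρF α) (TρF α v) (TρF α w)) :
    ∀ x ∈ leaf,
      -- X_red is tangent to J̃⁻¹(μ)/F :
      ((∀ i : Fin k, dMbar (Jbar i) x (Xred x) = 0) ∧ Xred x ∈ Tleaf x) ∧
      -- on the leaf, X_red is hamiltonian for ω_μ^B with hamiltonian
      -- H_μ = (ι_μ^red)^* H_red :
      (∀ w ∈ Tleaf x, ωμ x (Xred x) w = dMbar Hred x w) :=
  statement12_general ρF TρF hTρF dMt dMbar hchain Xnht Xred hXred ΩB Ht Hred hHred hdyn Jt Jbar
    hJbar hJcons L leaf hleaf Tleaf hTleaf ωμ hωμ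
end

section
/- For μ = c_iμ^i with c_i ∈ ℝ and μ^i the dual basis to the partially reduced horizontal gauge symmetries, the restriction shift_μ := Shift_μ|_{J̃^{-1}(μ)} : J̃^{-1}(μ) → J̃^{-1}(0) is a well-defined F-equivariant diffeomorphism; hence it descends to a diffeomorphism shift̄_μ : J̃^{-1}(μ)/F → J̃^{-1}(0)/F with shift̄_μ ∘ ρ_μ = ρ₀ ∘ shift_μ. -/
/-!
On each fibre of `T*Q̃`, `Shift_μ` is translation by the covector `θ_x = c_i Ỹ^i_x`. Because `Ỹ^i`
is dual to the generators `η_i`, `θ_x ∘ σ̃_x = c_i μ^i_x`, so the translation moves the level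
`J̃ = μ` onto the level `J̃ = 0`, with inverse translation by `+θ`. The `F`-invariance of `θ` makes
the translation commute with the cotangent-lifted action, since that action is characterised by
its pairing with the tangent lift. An equivariant bijection between the level sets matches the
`F`-orbits, so it descends to a bijection of the orbit spaces.
-/

theorem exists_bijective_of_surjOn_of_fiber_iff {X Y P Q : Type*} {f : X → Y}
    {s : Set X} {t : Set Y} (hf : Set.SurjOn f s t) (πs : X → P) (πt : Y → Q)
    (hπs : ∀ p, ∃ α ∈ s, πs α = p) (hπt : ∀ q, ∃ β ∈ t, πt β = q)
    (hfib : ∀ α ∈ s, ∀ β ∈ s, πs α = πs β ↔ πt (f α) = πt (f β)) :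
    ∃ g : P → Q, (∀ α ∈ s, g (πs α) = πt (f α)) ∧ Function.Bijective g := by
  choose rep hrep_mem hrep using hπs
  have hdesc : ∀ α ∈ s, πt (f (rep (πs α))) = πt (f α) := fun α hα =>
    (hfib _ (hrep_mem _) α hα).1 (hrep _)
  refine ⟨fun p => πt (f (rep p)), hdesc, fun p q hpq => ?_, fun q => ?_⟩
  · rw [← hrep p, ← hrep q]
    exact (hfib _ (hrep_mem p) _ (hrep_mem q)).2 hpq
  · obtain ⟨β, hβ, rfl⟩ := hπt q
    obtain ⟨α, hα, rfl⟩ := hf hβ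
    exact ⟨πs α, hdesc α hα⟩

section LevelSets

variable {R V E Q : Type*} [CommRing R] [AddCommGroup V] [Module R V] [AddCommGroup E]
  [Module R E]

theorem LinearMap.eq_of_separating {ι : Type*} {η : ι → V}
    (hsep : ∀ φ : V →ₗ[R] R, (∀ i, φ (η i) = 0) → φ = 0) {φ ψ : V →ₗ[R] R}
    (h : ∀ i, φ (η i) = ψ (η i)) : φ = ψ :=
  sub_eq_zero.mp (hsep _ fun i => by simp [h])

theorem sum_smul_comp_eq_sum_smul_of_dual {k : ℕ} {η : Fin k → V} {Y : Fin k → E →ₗ[R] R}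
    {μ : Fin k → V →ₗ[R] R} {σ : V →ₗ[R] E}
    (hsep : ∀ φ : V →ₗ[R] R, (∀ i, φ (η i) = 0) → φ = 0)
    (hY : ∀ i j, Y i (σ (η j)) = if i = j then (1 : R) else 0)
    (hdual : ∀ i j, μ i (η j) = if i = j then (1 : R) else 0) (c : Fin k → R) :
    (∑ i, c i • Y i) ∘ₗ σ = ∑ i, c i • μ i :=
  LinearMap.eq_of_separating hsep fun j => by simp [LinearMap.sum_apply, hY, hdual]

theorem bijOn_translate_levelSet (σ : Q → V →ₗ[R] E) (θ : Q → E →ₗ[R] R) :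
    Set.BijOn (fun α : Q × (E →ₗ[R] R) => (α.1, α.2 - θ α.1))
      {α | α.2 ∘ₗ σ α.1 = θ α.1 ∘ₗ σ α.1} {α | α.2 ∘ₗ σ α.1 = 0} :=
  Set.InvOn.bijOn (f' := fun α => (α.1, α.2 + θ α.1)) ⟨fun α _ => by simp, fun α _ => by simp⟩
    (fun α (hα : _ = _) => by simp [LinearMap.sub_comp, hα])
    (fun α (hα : _ = _) => by simp [LinearMap.add_comp, hα])

theorem translate_injective (θ : Q → E →ₗ[R] R) :
    Function.Injective fun α : Q × (E →ₗ[R] R) => (α.1, α.2 - θ α.1) :=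
  Function.LeftInverse.injective (g := fun α => (α.1, α.2 + θ α.1)) fun α => by simp

end LevelSets

section CotangentLift

variable {R E G Q : Type*} [CommRing R] [AddCommGroup E] [Module R E] [SMul G Q]
  {TΨ : G → Q → E →ₗ[R] E} {act : G → Q × (E →ₗ[R] R) → Q × (E →ₗ[R] R)}

theorem eq_act_of_pairing (hTΨ : ∀ h x, Function.Surjective (TΨ h x))
    (hact1 : ∀ h α, (act h α).1 = h • α.1)
    (hactpair : ∀ h α v, (act h α).2 (TΨ h α.1 v) = α.2 v) {h : G} {α β : Q × (E →ₗ[R] R)}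
    (h1 : β.1 = h • α.1) (h2 : ∀ v, β.2 (TΨ h α.1 v) = α.2 v) : β = act h α := by
  refine Prod.ext (h1.trans (hact1 h α).symm) (LinearMap.ext fun w => ?_)
  obtain ⟨v, rfl⟩ := hTΨ h α.1 w
  rw [h2, hactpair]

theorem translate_act_of_invariant (hTΨ : ∀ h x, Function.Surjective (TΨ h x))
    (hact1 : ∀ h α, (act h α).1 = h • α.1)
    (hactpair : ∀ h α v, (act h α).2 (TΨ h α.1 v) = α.2 v) {θ : Q → E →ₗ[R] R}
    (hθ : ∀ h x v, θ (h • x) (TΨ h x v) = θ x v) (h : G) (α : Q × (E →ₗ[R] R)) :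
    ((act h α).1, (act h α).2 - θ (act h α).1) = act h (α.1, α.2 - θ α.1) :=
  eq_act_of_pairing hTΨ hact1 hactpair (hact1 h α) fun v => by
    simp [hact1, hactpair, hθ]

end CotangentLift

theorem statement16_general
    {Qt Et 𝔣 F Pμ P0 : Type*} [Group F] [MulAction F Qt]
    [AddCommGroup Et] [Module ℝ Et] [AddCommGroup 𝔣] [Module ℝ 𝔣]
    {k : ℕ}
    -- gauge symmetries η_i, connection 1-forms Ỹ^i, dual basis μ^i
    (ηt : Fin k → Qt → 𝔣)
    (Yt : Fin k → Qt → Et →ₗ[ℝ] ℝ)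
    (μd : Fin k → Qt → 𝔣 →ₗ[ℝ] ℝ)
    (hdual : ∀ (i j : Fin k) (x : Qt), μd i x (ηt j x) = if i = j then (1:ℝ) else 0)
    (hsep : ∀ (x : Qt) (φ : 𝔣 →ₗ[ℝ] ℝ), (∀ i : Fin k, φ (ηt i x) = 0) → φ = 0)
    -- infinitesimal generators of the F-action on Q̃ and the connection property
    (σt : Qt → 𝔣 →ₗ[ℝ] Et)
    (hY : ∀ (i j : Fin k) (x : Qt),
      Yt i x (σt x (ηt j x)) = if i = j then (1:ℝ) else 0)
    -- the tangent lift of the F-action on Q̃ and the cotangent-lifted action on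
    -- T*Q̃ = Qt × Et*
    (TΨt : F → Qt → Et →ₗ[ℝ] Et) (hTΨt : ∀ h x, Function.Bijective (TΨt h x))
    (act : F → Qt × (Et →ₗ[ℝ] ℝ) → Qt × (Et →ₗ[ℝ] ℝ))
    (hact1 : ∀ h α, (act h α).1 = h • α.1)
    (hactpair : ∀ (h : F) (α : Qt × (Et →ₗ[ℝ] ℝ)) (v : Et),
      (act h α).2 (TΨt h α.1 v) = α.2 v)
    -- equivariance of the data: the 1-form c_i Ỹ^i is F-invariant (the J̃_i are
    -- F-invariant and the connection is equivariant)
    (c : Fin k → ℝ)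
    (hYequiv : ∀ (h : F) (x : Qt) (v : Et),
      (∑ i, c i • Yt i (h • x)) (TΨt h x v) = (∑ i, c i • Yt i x) v)
    -- the level sets J̃⁻¹(μ) and J̃⁻¹(0), with J̃(x,p) = p ∘ σ̃_x
    (Lμ L0 : Set (Qt × (Et →ₗ[ℝ] ℝ)))
    (hLμ : Lμ = {α | α.2 ∘ₗ σt α.1 = ∑ i, c i • μd i α.1})
    (hL0 : L0 = {α | α.2 ∘ₗ σt α.1 = 0})
    -- the shift map Shift_μ (α) = α − ⟨μ, Ã⟩
    (Shift : Qt × (Et →ₗ[ℝ] ℝ) → Qt × (Et →ₗ[ℝ] ℝ))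
    (hShift : ∀ α, Shift α = (α.1, α.2 - ∑ i, c i • Yt i α.1))
    -- the orbit projections ρ_μ : J̃⁻¹(μ) → J̃⁻¹(μ)/F and ρ₀ : J̃⁻¹(0) → J̃⁻¹(0)/F
    (ρμ : Qt × (Et →ₗ[ℝ] ℝ) → Pμ) (ρ0 : Qt × (Et →ₗ[ℝ] ℝ) → P0)
    (hρμsurj : ∀ x : Pμ, ∃ α ∈ Lμ, ρμ α = x)
    (hρ0surj : ∀ x : P0, ∃ α ∈ L0, ρ0 α = x)
    (hρμfib : ∀ α ∈ Lμ, ∀ β ∈ Lμ, (ρμ α = ρμ β ↔ ∃ h : F, act h α = β))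
    (hρ0fib : ∀ α ∈ L0, ∀ β ∈ L0, (ρ0 α = ρ0 β ↔ ∃ h : F, act h α = β)) :
    -- shift_μ is a well-defined bijection J̃⁻¹(μ) → J̃⁻¹(0):
    Set.BijOn Shift Lμ L0 ∧
    -- shift_μ is F-equivariant:
    (∀ (h : F) (α : Qt × (Et →ₗ[ℝ] ℝ)), α ∈ Lμ → Shift (act h α) = act h (Shift α)) ∧
    -- hence it descends to a diffeomorphism shift̄_μ : J̃⁻¹(μ)/F → J̃⁻¹(0)/F with
    -- shift̄_μ ∘ ρ_μ = ρ₀ ∘ shift_μ: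
    (∃ sbar : Pμ → P0,
      (∀ α ∈ Lμ, sbar (ρμ α) = ρ0 (Shift α)) ∧ Function.Bijective sbar) := by
  set θ : Qt → Et →ₗ[ℝ] ℝ := fun x => ∑ i, c i • Yt i x
  obtain rfl : Shift = fun α => (α.1, α.2 - θ α.1) := funext hShift
  have hLμθ : Lμ = {α | α.2 ∘ₗ σt α.1 = θ α.1 ∘ₗ σt α.1} := by
    simp only [hLμ, θ, sum_smul_comp_eq_sum_smul_of_dual (hsep _) (hY · · _) (hdual · · _)]
  have hbij := bijOn_translate_levelSet σt θ
  rw [← hLμθ, ← hL0] at hbij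
  have hequiv := translate_act_of_invariant (θ := θ) (fun h x => (hTΨt h x).2) hact1 hactpair
    hYequiv
  refine ⟨hbij, fun h α _ => hequiv h α, exists_bijective_of_surjOn_of_fiber_iff
    hbij.surjOn ρμ ρ0 hρμsurj hρ0surj fun α hα β hβ => ?_⟩
  rw [hρμfib α hα β hβ, hρ0fib _ (hbij.mapsTo hα) _ (hbij.mapsTo hβ)]
  simp only [← hequiv, (translate_injective θ).eq_iff]

theorem statement16
    {Qt Et 𝔣 F Pμ P0 : Type*} [Group F] [MulAction F Qt]
    [AddCommGroup Et] [Module ℝ Et] [AddCommGroup 𝔣] [Module ℝ 𝔣]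
    {k : ℕ}
    -- gauge symmetries η_i, connection 1-forms Ỹ^i, dual basis μ^i
    (ηt : Fin k → Qt → 𝔣)
    (Yt : Fin k → Qt → Et →ₗ[ℝ] ℝ)
    (μd : Fin k → Qt → 𝔣 →ₗ[ℝ] ℝ)
    (hdual : ∀ (i j : Fin k) (x : Qt), μd i x (ηt j x) = if i = j then (1:ℝ) else 0)
    (hsep : ∀ (x : Qt) (φ : 𝔣 →ₗ[ℝ] ℝ), (∀ i : Fin k, φ (ηt i x) = 0) → φ = 0)
    -- infinitesimal generators of the F-action on Q̃ and the connection property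
    (σt : Qt → 𝔣 →ₗ[ℝ] Et)
    (hY : ∀ (i j : Fin k) (x : Qt),
      Yt i x (σt x (ηt j x)) = if i = j then (1:ℝ) else 0)
    -- the tangent lift of the F-action on Q̃ and the cotangent-lifted action on
    -- T*Q̃ = Qt × Et*
    (TΨt : F → Qt → Et →ₗ[ℝ] Et) (hTΨt : ∀ h x, Function.Bijective (TΨt h x))
    (act : F → Qt × (Et →ₗ[ℝ] ℝ) → Qt × (Et →ₗ[ℝ] ℝ))
    (hact1 : ∀ h α, (act h α).1 = h • α.1)
    (hactpair : ∀ (h : F) (α : Qt × (Et →ₗ[ℝ] ℝ)) (v : Et),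
      (act h α).2 (TΨt h α.1 v) = α.2 v)
    (hactmul : ∀ (h h' : F) (α), act h (act h' α) = act (h * h') α)
    (hactone : ∀ α, act 1 α = α)
    -- equivariance of the data: the 1-form c_i Ỹ^i is F-invariant (the J̃_i are
    -- F-invariant and the connection is equivariant)
    (c : Fin k → ℝ)
    (hYequiv : ∀ (h : F) (x : Qt) (v : Et),
      (∑ i, c i • Yt i (h • x)) (TΨt h x v) = (∑ i, c i • Yt i x) v)
    -- the level sets J̃⁻¹(μ) and J̃⁻¹(0), with J̃(x,p) = p ∘ σ̃_x
    (Lμ L0 : Set (Qt × (Et →ₗ[ℝ] ℝ)))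
    (hLμ : Lμ = {α | α.2 ∘ₗ σt α.1 = ∑ i, c i • μd i α.1})
    (hL0 : L0 = {α | α.2 ∘ₗ σt α.1 = 0})
    -- the shift map Shift_μ (α) = α − ⟨μ, Ã⟩
    (Shift : Qt × (Et →ₗ[ℝ] ℝ) → Qt × (Et →ₗ[ℝ] ℝ))
    (hShift : ∀ α, Shift α = (α.1, α.2 - ∑ i, c i • Yt i α.1))
    -- the orbit projections ρ_μ : J̃⁻¹(μ) → J̃⁻¹(μ)/F and ρ₀ : J̃⁻¹(0) → J̃⁻¹(0)/F
    (ρμ : Qt × (Et →ₗ[ℝ] ℝ) → Pμ) (ρ0 : Qt × (Et →ₗ[ℝ] ℝ) → P0)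
    (hρμsurj : ∀ x : Pμ, ∃ α ∈ Lμ, ρμ α = x)
    (hρ0surj : ∀ x : P0, ∃ α ∈ L0, ρ0 α = x)
    (hρμfib : ∀ α ∈ Lμ, ∀ β ∈ Lμ, (ρμ α = ρμ β ↔ ∃ h : F, act h α = β))
    (hρ0fib : ∀ α ∈ L0, ∀ β ∈ L0, (ρ0 α = ρ0 β ↔ ∃ h : F, act h α = β)) :
    -- shift_μ is a well-defined bijection J̃⁻¹(μ) → J̃⁻¹(0):
    Set.BijOn Shift Lμ L0 ∧
    -- shift_μ is F-equivariant:
    (∀ (h : F) (α : Qt × (Et →ₗ[ℝ] ℝ)), α ∈ Lμ → Shift (act h α) = act h (Shift α)) ∧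
    -- hence it descends to a diffeomorphism shift̄_μ : J̃⁻¹(μ)/F → J̃⁻¹(0)/F with
    -- shift̄_μ ∘ ρ_μ = ρ₀ ∘ shift_μ:
    (∃ sbar : Pμ → P0,
      (∀ α ∈ Lμ, sbar (ρμ α) = ρ0 (Shift α)) ∧ Function.Bijective sbar) :=
  statement16_general ηt Yt μd hdual hsep σt hY TΨt hTΨt act hact1 hactpair c hYequiv Lμ L0 hLμ hL0
    Shift hShift ρμ ρ0 hρμsurj hρ0surj hρμfib hρ0fib
end
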